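/- Let M > 0, r ≥ 1, n ≥ 1, and let 0 ≤ u₁ < … < u_{2n} < 2π. Let φ = φ(W^r_{r−1}(M), u) be a W^r_{r−1}(M)-ideal spline with 2n knots vanishing at u₁,…,u_{2n}. Then for every x ∈ W^r_{r−1}(M) with x(u_k) = 0 for all k = 1,…,2n and every t ∈ [0,2π): |x(t)| ≤ |φ(t)|. -/

import Mathlib

open Real

/-- The class `W^r_{r-1}(M)`: 2π-periodic functions `x` of smoothness `C^{r-1}` whose
`(r-1)`-st derivative is 1-Lipschitz (i.e. `x^{(r-1)}` is absolutely continuous with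
`‖x^{(r)}‖_∞ ≤ 1`) and satisfies `‖x^{(r-1)}‖_∞ ≤ M`. -/
def MemW (M : ℝ) (r : ℕ) (x : ℝ → ℝ) : Prop :=
  Function.Periodic x (2 * π) ∧ ContDiff ℝ (r - 1 : ℕ) x ∧
    LipschitzWith 1 (iteratedDeriv (r - 1) x) ∧ ∀ t, |iteratedDeriv (r - 1) x t| ≤ M

/-- `φ` is a `W^r_{r-1}(M)`-ideal spline with knots `t₁ < … < t_{2n+1} = t₁ + 2π`:
`φ ∈ W^r_{r-1}(M)` and for each `k` there are `α_k ∈ [0, t_{k+1} - t_k]` and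
`ε_k = ±1` with `φ^{(r)} = ε_k` on `(t_k, t_k + α_k)`, and `φ^{(r)} = 0`,
`φ^{(r-1)} = ε_k M` on `(t_k + α_k, t_{k+1})`. -/
def IsIdealSplineW (M : ℝ) (r n : ℕ) (φ : ℝ → ℝ) (t : Fin (2 * n + 1) → ℝ) : Prop :=
  MemW M r φ ∧ StrictMono t ∧ t (Fin.last (2 * n)) = t 0 + 2 * π ∧
    ∀ k : Fin (2 * n), ∃ α ∈ Set.Icc (0 : ℝ) (t k.succ - t k.castSucc), ∃ ε : ℝ,
      (ε = 1 ∨ ε = -1) ∧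
      (∀ s ∈ Set.Ioo (t k.castSucc) (t k.castSucc + α),
        HasDerivAt (iteratedDeriv (r - 1) φ) ε s) ∧
      (∀ s ∈ Set.Ioo (t k.castSucc + α) (t k.succ),
        HasDerivAt (iteratedDeriv (r - 1) φ) 0 s ∧ iteratedDeriv (r - 1) φ s = ε * M)

private lemma periodic_deriv' {f : ℝ → ℝ} {c : ℝ} (hf : Function.Periodic f c) :
    Function.Periodic (deriv f) c := by
  intro s
  have h1 : (fun y => f (y + c)) = f := funext fun y => hf y
  calc deriv f (s + c) = deriv (fun y => f (y + c)) s := (deriv_comp_add_const f c s).symm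
    _ = deriv f s := by rw [h1]

private lemma periodic_iteratedDeriv' {f : ℝ → ℝ} {c : ℝ} (hf : Function.Periodic f c) :
    ∀ m : ℕ, Function.Periodic (iteratedDeriv m f) c := by
  intro m
  induction m with
  | zero => simpa [iteratedDeriv_zero] using hf
  | succ k ih => rw [iteratedDeriv_succ]; exact periodic_deriv' ih

private lemma rolle_step' {f : ℝ → ℝ} {P : ℝ} (hP : 0 < P)
    (hf : Differentiable ℝ f) (hp : Function.Periodic f P)
    (S : Finset ℝ) (hz : ∀ s ∈ S, f s = 0)
    (hsp : ∀ s ∈ S, ∀ s' ∈ S, s' - s < P) :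
    ∃ S' : Finset ℝ, S'.card = S.card ∧ (∀ s ∈ S', deriv f s = 0) ∧
      ∀ s ∈ S', ∀ s' ∈ S', s' - s < P := by
  classical
  rcases S.eq_empty_or_nonempty with rfl | hne
  · exact ⟨∅, rfl, by simp, by simp⟩
  set m := S.min' hne with hm
  have hmS : m ∈ S := S.min'_mem hne
  set next : ℝ → ℝ := fun s =>
    if h : ((S.filter (fun y => s < y)).Nonempty) then (S.filter (fun y => s < y)).min' h
    else m + P with hnextdef
  have hnext : ∀ s ∈ S, s < next s ∧ f (next s) = 0 ∧ next s ≤ m + P ∧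
      ∀ s' ∈ S, s < s' → next s ≤ s' := by
    intro s hs
    by_cases h : ((S.filter (fun y => s < y)).Nonempty)
    · have hmem := (S.filter (fun y => s < y)).min'_mem h
      rw [Finset.mem_filter] at hmem
      refine ⟨by simp only [hnextdef, dif_pos h]; exact hmem.2, ?_, ?_, ?_⟩
      · simp only [hnextdef, dif_pos h]; exact hz _ hmem.1
      · simp only [hnextdef, dif_pos h]
        have := hsp m hmS _ hmem.1
        linarith
      · intro s' hs' hss'
        simp only [hnextdef, dif_pos h]
        exact Finset.min'_le _ _ (Finset.mem_filter.2 ⟨hs', hss'⟩)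
    · have hnv : next s = m + P := by simp only [hnextdef, dif_neg h]
      refine ⟨?_, ?_, le_of_eq hnv, ?_⟩
      · rw [hnv]; have := hsp m hmS s hs; linarith
      · rw [hnv]; rw [hp m]; exact hz m hmS
      · intro s' hs' hss'
        exact absurd ⟨s', Finset.mem_filter.2 ⟨hs', hss'⟩⟩ h
  have key : ∀ s ∈ S, ∃ w, w ∈ Set.Ioo s (next s) ∧ deriv f w = 0 := by
    intro s hs
    obtain ⟨hlt, hfz, _, _⟩ := hnext s hs
    obtain ⟨w, hw, hdw⟩ := exists_deriv_eq_zero hlt hf.continuous.continuousOn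
      (by rw [hz s hs, hfz])
    exact ⟨w, hw, hdw⟩
  choose! w hw1 hw2 using key
  have hinj : Set.InjOn w S := by
    intro p hp' q hq' hpq
    by_contra hne2
    rcases lt_or_gt_of_ne hne2 with h | h
    · have h1 := (hw1 p hp').2
      have h2 := (hnext p hp').2.2.2 q hq' h
      have h3 := (hw1 q hq').1
      linarith
    · have h1 := (hw1 q hq').2
      have h2 := (hnext q hq').2.2.2 p hp' h
      have h3 := (hw1 p hp').1
      linarith
  refine ⟨S.image w, Finset.card_image_of_injOn hinj, ?_, ?_⟩
  · intro y hy
    obtain ⟨s, hs, rfl⟩ := Finset.mem_image.1 hy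
    exact hw2 s hs
  · intro y hy y' hy'
    obtain ⟨s, hs, rfl⟩ := Finset.mem_image.1 hy
    obtain ⟨s', hs', rfl⟩ := Finset.mem_image.1 hy'
    have h1 : m ≤ s := S.min'_le s hs
    have h2 := (hw1 s hs).1
    have h3 := (hw1 s' hs').2
    have h4 := (hnext s' hs').2.2.1
    linarith

private lemma rolle_iter' {f : ℝ → ℝ} {P : ℝ} (hP : 0 < P) {N : ℕ}
    (hcd : ContDiff ℝ (N : ℕ) f) (hp : Function.Periodic f P)
    (S : Finset ℝ) (hz : ∀ s ∈ S, f s = 0)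
    (hsp : ∀ s ∈ S, ∀ s' ∈ S, s' - s < P) :
    ∀ j, j ≤ N → ∃ S' : Finset ℝ, S'.card = S.card ∧
      (∀ s ∈ S', iteratedDeriv j f s = 0) ∧ ∀ s ∈ S', ∀ s' ∈ S', s' - s < P := by
  intro j
  induction j with
  | zero => intro _; exact ⟨S, rfl, by simpa [iteratedDeriv_zero] using hz, hsp⟩
  | succ j ih =>
    intro hj
    obtain ⟨S1, hc, hz1, hsp1⟩ := ih (le_of_lt (Nat.lt_of_succ_le hj))
    have hdiff : Differentiable ℝ (iteratedDeriv j f) :=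
      hcd.differentiable_iteratedDeriv j (by exact_mod_cast Nat.lt_of_succ_le hj)
    have hper : Function.Periodic (iteratedDeriv j f) P := periodic_iteratedDeriv' hp j
    obtain ⟨S', h1, h2, h3⟩ := rolle_step' hP hdiff hper S1 hz1 hsp1
    refine ⟨S', h1.trans hc, ?_, h3⟩
    intro s hs
    rw [iteratedDeriv_succ]
    exact h2 s hs


private lemma interval_zeros' {Φ X : ℝ → ℝ} {M c a b α ε : ℝ}
    (hM : 0 < M) (hc : |c| < 1)
    (hΦcont : Continuous Φ)
    (hXlip : LipschitzWith 1 X) (hXbd : ∀ s, |X s| ≤ M)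
    (hε : ε = 1 ∨ ε = -1)
    (hder1 : ∀ s ∈ Set.Ioo a (a + α), HasDerivAt Φ ε s)
    (hconst : ∀ s ∈ Set.Ioo (a + α) b, Φ s = ε * M)
    {p q : ℝ} (hp : p ∈ Set.Ico a b) (hq : q ∈ Set.Ico a b)
    (hzp : Φ p - c * X p = 0) (hzq : Φ q - c * X q = 0) : p = q := by
  have hεabs : |ε| = 1 := by rcases hε with rfl | rfl <;> simp
  -- Claim A : any zero in [a, b) lies in [a, a+α)
  have claimA : ∀ s ∈ Set.Ico a b, Φ s - c * X s = 0 → s < a + α := by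
    intro s hs hzs
    by_contra hge
    push_neg at hge
    have hlt : a + α < b := lt_of_le_of_lt hge hs.2
    have hEq : Set.EqOn Φ (fun _ => ε * M) (Set.Ioo (a + α) b) := fun z hz => hconst z hz
    have hcl : Set.EqOn Φ (fun _ => ε * M) (Set.Icc (a + α) b) := by
      have := hEq.closure hΦcont continuous_const
      rwa [closure_Ioo (ne_of_lt hlt)] at this
    have hΦs : Φ s = ε * M := hcl ⟨hge, le_of_lt hs.2⟩
    have h1 : |c * X s| ≤ |c| * M := by
      rw [abs_mul]
      exact mul_le_mul_of_nonneg_left (hXbd s) (abs_nonneg c)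
    have h2 : |c| * M < M := by nlinarith [abs_nonneg c]
    have h3 : c * X s = ε * M := by linarith [hzs, hΦs.symm ▸ hzs]
    rw [h3, abs_mul, hεabs, one_mul, abs_of_pos hM] at h1
    linarith
  have hpα := claimA p hp hzp
  have hqα := claimA q hq hzq
  by_contra hne
  have haα : a < a + α := lt_of_le_of_lt hp.1 hpα
  -- Φ is affine with slope ε on [a, a+α]
  set F : ℝ → ℝ := fun z => Φ z - ε * z with hF
  have hFcont : Continuous F := hΦcont.sub (continuous_const.mul continuous_id)
  have hF0 : ∀ z ∈ Set.Ioo a (a + α), HasDerivAt F 0 z := by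
    intro z hz
    have := (hder1 z hz).sub ((hasDerivAt_id z).const_mul ε)
    simp at this; exact this
  have hFc : ∀ z ∈ Set.Ioo a (a + α), ∀ w ∈ Set.Ioo a (a + α), z ≤ w → F w = F z := by
    intro z hz w hw hzw
    rcases eq_or_lt_of_le hzw with rfl | hlt
    · rfl
    · exact constant_of_has_deriv_right_zero (hFcont.continuousOn)
        (fun y hy => (hF0 y ⟨lt_of_lt_of_le hz.1 hy.1, lt_trans hy.2 hw.2⟩).hasDerivWithinAt)
        w ⟨hzw, le_refl w⟩
  set m0 : ℝ := a + α / 2 with hm0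
  have hm0mem : m0 ∈ Set.Ioo a (a + α) := by constructor <;> [skip; skip] <;> simp [hm0] <;> linarith
  have hEqF : Set.EqOn F (fun _ => F m0) (Set.Ioo a (a + α)) := by
    intro z hz
    rcases le_total z m0 with h | h
    · exact (hFc z hz m0 hm0mem h).symm
    · exact hFc m0 hm0mem z hz h
  have hclF : Set.EqOn F (fun _ => F m0) (Set.Icc a (a + α)) := by
    have := hEqF.closure hFcont continuous_const
    rwa [closure_Ioo (ne_of_lt haα)] at this
  have hFp : F p = F m0 := hclF ⟨hp.1, le_of_lt hpα⟩
  have hFq : F q = F m0 := hclF ⟨hq.1, le_of_lt hqα⟩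
  have hkey : Φ q - Φ p = ε * (q - p) := by
    have : F q = F p := hFq.trans hFp.symm
    simp only [hF] at this
    ring_nf
    ring_nf at this
    linarith
  have hXd : |X q - X p| ≤ |q - p| := by
    have := hXlip.dist_le_mul q p
    simpa [Real.dist_eq] using this
  have heq : ε * (q - p) = c * (X q - X p) := by
    rw [← hkey]; ring_nf; linarith [hzp, hzq]
  have hqp : 0 < |q - p| := abs_pos.2 (sub_ne_zero.2 (Ne.symm hne))
  have : |q - p| ≤ |c| * |q - p| := by
    calc |q - p| = |ε * (q - p)| := by rw [abs_mul, hεabs, one_mul]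
      _ = |c * (X q - X p)| := by rw [heq]
      _ = |c| * |X q - X p| := abs_mul _ _
      _ ≤ |c| * |q - p| := mul_le_mul_of_nonneg_left hXd (abs_nonneg c)
  nlinarith

private lemma exists_interval' {n : ℕ} {t : Fin (2 * n + 1) → ℝ} (hmono : StrictMono t)
    {s : ℝ} (h0 : t 0 ≤ s) (h2 : s < t (Fin.last (2 * n))) :
    ∃ k : Fin (2 * n), t k.castSucc ≤ s ∧ s < t k.succ := by
  classical
  set A : Finset (Fin (2 * n + 1)) := Finset.univ.filter (fun j => t j ≤ s) with hA
  have hAne : A.Nonempty := ⟨0, by simp [hA, h0]⟩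
  set j := A.max' hAne with hj
  have hjA : j ∈ A := A.max'_mem hAne
  have hjle : t j ≤ s := by simpa [hA] using (Finset.mem_filter.1 hjA).2
  have hjne : j ≠ Fin.last (2 * n) := by
    intro h
    rw [h] at hjle
    linarith
  have hjlt : (j : ℕ) < 2 * n := by
    have := j.isLt
    rcases Nat.lt_or_ge (j : ℕ) (2 * n) with h | h
    · exact h
    · exfalso
      exact hjne (Fin.ext (le_antisymm (Nat.lt_succ_iff.1 j.isLt) h))
  refine ⟨⟨(j : ℕ), hjlt⟩, ?_, ?_⟩
  · have : (⟨(j : ℕ), hjlt⟩ : Fin (2 * n)).castSucc = j := by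
      apply Fin.ext; simp
    rw [this]; exact hjle
  · by_contra hx
    push_neg at hx
    have hmem : (⟨(j : ℕ), hjlt⟩ : Fin (2 * n)).succ ∈ A := by
      rw [hA, Finset.mem_filter]
      exact ⟨Finset.mem_univ _, hx⟩
    have := A.le_max' _ hmem
    rw [← hj] at this
    have hval : ((⟨(j : ℕ), hjlt⟩ : Fin (2 * n)).succ : ℕ) = (j : ℕ) + 1 := rfl
    have := Fin.le_def.1 this
    omega


/-- Extremal property of ideal splines (Theorem 3 of the paper, zero-data case): if
`φ` is a `W^r_{r-1}(M)`-ideal spline with `2n` knots vanishing at the points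
`u₁ < … < u_{2n}` of `[0, 2π)`, then every `x ∈ W^r_{r-1}(M)` vanishing at all the
`u_k` satisfies `|x(t)| ≤ |φ(t)|` for all `t ∈ [0, 2π)`. -/
theorem stmt6 (M : ℝ) (hM : 0 < M) (r n : ℕ) (hr : 1 ≤ r) (hn : 1 ≤ n)
    (u : Fin (2 * n) → ℝ) (humono : StrictMono u)
    (hu0 : ∀ i, 0 ≤ u i) (hu2 : ∀ i, u i < 2 * π)
    (φ : ℝ → ℝ) (t : Fin (2 * n + 1) → ℝ)
    (hφ : IsIdealSplineW M r n φ t) (hφu : ∀ i, φ (u i) = 0)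
    (x : ℝ → ℝ) (hx : MemW M r x) (hxu : ∀ i, x (u i) = 0) :
    ∀ s ∈ Set.Ico (0 : ℝ) (2 * π), |x s| ≤ |φ s| := by
  classical
  obtain ⟨⟨hφper, hφcd, hφlip, hφbd⟩, htmono, htlast, hknots⟩ := hφ
  obtain ⟨hxper, hxcd, hxlip, hxbd⟩ := hx
  intro s0 hs0
  by_contra habs
  push_neg at habs
  have hx0 : x s0 ≠ 0 := by
    intro h
    rw [h] at habs
    simp only [abs_zero] at habs
    exact absurd habs (not_lt.2 (abs_nonneg _))
  set c := φ s0 / x s0 with hcdef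
  have hc : |c| < 1 := by
    rw [hcdef, abs_div]
    exact (div_lt_one (abs_pos.2 hx0)).2 habs
  set δ : ℝ → ℝ := φ - c • x with hδ
  have hcscd : ContDiff ℝ ((r - 1 : ℕ) : ℕ∞) (c • x) := hxcd.const_smul c
  have hδval : ∀ y, δ y = φ y - c * x y := fun y => by simp [hδ, smul_eq_mul]
  have hδper : Function.Periodic δ (2 * π) := by
    intro y
    rw [hδval, hδval, hφper y, hxper y]
  have hδcd : ContDiff ℝ ((r - 1 : ℕ) : ℕ) δ := hφcd.sub hcscd
  have pi2 : (0:ℝ) < 2 * π := by linarith [Real.pi_pos]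
  -- the initial set of 2n+1 zeros of δ
  set S0 : Finset ℝ := insert s0 (Finset.image u Finset.univ) with hS0
  have hmemrange : ∀ y ∈ S0, 0 ≤ y ∧ y < 2 * π := by
    intro y hy
    rcases Finset.mem_insert.1 hy with rfl | hy
    · exact ⟨hs0.1, hs0.2⟩
    · obtain ⟨i, _, rfl⟩ := Finset.mem_image.1 hy
      exact ⟨hu0 i, hu2 i⟩
  have hS0card : S0.card = 2 * n + 1 := by
    rw [hS0, Finset.card_insert_of_notMem, Finset.card_image_of_injective _ humono.injective]
    · simp
    · intro h
      obtain ⟨i, _, hi⟩ := Finset.mem_image.1 h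
      exact hx0 (hi ▸ hxu i)
  have hS0z : ∀ y ∈ S0, δ y = 0 := by
    intro y hy
    rcases Finset.mem_insert.1 hy with rfl | hy
    · rw [hδval, hcdef]
      field_simp
      ring
    · obtain ⟨i, _, rfl⟩ := Finset.mem_image.1 hy
      rw [hδval, hφu i, hxu i]
      ring
  have hS0sp : ∀ y ∈ S0, ∀ y' ∈ S0, y' - y < 2 * π := by
    intro y hy y' hy'
    obtain ⟨h1, h2⟩ := hmemrange y hy
    obtain ⟨h3, h4⟩ := hmemrange y' hy'
    linarith
  -- iterate Rolle r-1 times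
  obtain ⟨S1, hS1card, hS1z, hS1sp⟩ := rolle_iter' pi2 hδcd hδper S0 hS0z hS0sp (r - 1) le_rfl
  have hconv : ∀ y, iteratedDeriv (r - 1) δ y =
      iteratedDeriv (r - 1) φ y - c * iteratedDeriv (r - 1) x y := by
    intro y
    rw [hδ, ← iteratedDerivWithin_univ,
      iteratedDerivWithin_sub (Set.mem_univ y) uniqueDiffOn_univ hφcd.contDiffWithinAt
        hcscd.contDiffWithinAt,
      iteratedDerivWithin_const_smul (Set.mem_univ y) uniqueDiffOn_univ c hxcd.contDiffWithinAt,
      iteratedDerivWithin_univ, iteratedDerivWithin_univ]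
    simp [smul_eq_mul]
  have hgper : Function.Periodic (iteratedDeriv (r - 1) δ) (2 * π) :=
    periodic_iteratedDeriv' hδper (r - 1)
  -- translate the zeros into [t 0, t 0 + 2π)
  set ρ : ℝ → ℝ := fun y => y - ⌊(y - t 0) / (2 * π)⌋ * (2 * π) with hρ
  have hρmem : ∀ y, t 0 ≤ ρ y ∧ ρ y < t 0 + 2 * π := by
    intro y
    have h1 := Int.sub_floor_div_mul_nonneg (y - t 0) pi2
    have h2 := Int.sub_floor_div_mul_lt (y - t 0) pi2
    constructor <;> simp only [hρ] <;> linarith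
  have hρz : ∀ y, iteratedDeriv (r - 1) δ (ρ y) = iteratedDeriv (r - 1) δ y := fun y =>
    hgper.sub_int_mul_eq _
  have hρinj : Set.InjOn ρ S1 := by
    intro p hp q hq hpq
    simp only [hρ] at hpq
    set zp : ℤ := ⌊(p - t 0) / (2 * π)⌋ with hzp
    set zq : ℤ := ⌊(q - t 0) / (2 * π)⌋ with hzq
    have hd : p - q = ((zp - zq : ℤ) : ℝ) * (2 * π) := by push_cast; linarith
    have h1 := hS1sp p hp q hq
    have h2 := hS1sp q hq p hp
    have habs1 : |p - q| < 2 * π := abs_lt.2 ⟨by linarith, h2⟩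
    rw [hd, abs_mul, abs_of_pos pi2] at habs1
    have h3 : |((zp - zq : ℤ) : ℝ)| < 1 := by nlinarith
    have hz0 : zp - zq = 0 := by
      have h4 : ((|zp - zq| : ℤ) : ℝ) < 1 := by rwa [Int.cast_abs]
      have h5 : |zp - zq| < 1 := by exact_mod_cast h4
      exact Int.abs_lt_one_iff.1 h5
    have : ((zp - zq : ℤ) : ℝ) = 0 := by rw [hz0]; simp
    rw [this] at hd
    linarith
  set S' := S1.image ρ with hS'
  have hS'card : S'.card = 2 * n + 1 := by
    rw [hS', Finset.card_image_of_injOn hρinj, hS1card, hS0card]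
  have hS'z : ∀ y ∈ S', iteratedDeriv (r - 1) δ y = 0 := by
    intro y hy
    obtain ⟨p, hp, rfl⟩ := Finset.mem_image.1 hy
    rw [hρz]; exact hS1z p hp
  have hS'mem : ∀ y ∈ S', t 0 ≤ y ∧ y < t 0 + 2 * π := by
    intro y hy
    obtain ⟨p, hp, rfl⟩ := Finset.mem_image.1 hy
    exact hρmem p
  -- pigeonhole into the 2n knot intervals
  have hcover : ∀ y ∈ S', ∃ k : Fin (2 * n), t k.castSucc ≤ y ∧ y < t k.succ := by
    intro y hy
    obtain ⟨h1, h2⟩ := hS'mem y hy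
    exact exists_interval' htmono h1 (by rw [htlast]; exact h2)
  have hcover' : ∀ y : ℝ, ∃ k : Fin (2 * n), y ∈ S' → (t k.castSucc ≤ y ∧ y < t k.succ) := by
    intro y
    by_cases hy : y ∈ S'
    · obtain ⟨k, hk⟩ := hcover y hy
      exact ⟨k, fun _ => hk⟩
    · exact ⟨⟨0, by omega⟩, fun h => absurd h hy⟩
  choose K hK using hcover'
  have hmaps : ∀ y ∈ S', K y ∈ (Finset.univ : Finset (Fin (2 * n))) := fun y _ =>
    Finset.mem_univ _
  have hcards : (Finset.univ : Finset (Fin (2 * n))).card < S'.card := by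
    rw [hS'card, Finset.card_univ, Fintype.card_fin]; omega
  obtain ⟨p, hp, q, hq, hpq, hKeq⟩ :=
    Finset.exists_ne_map_eq_of_card_lt_of_maps_to hcards hmaps
  obtain ⟨α, hα, ε, hε, hder1, hder2⟩ := hknots (K p)
  have hq1 := (hK q hq).1
  have hq2 := (hK q hq).2
  rw [← hKeq] at hq1 hq2
  have hzp' : iteratedDeriv (r - 1) φ p - c * iteratedDeriv (r - 1) x p = 0 := by
    rw [← hconv p]; exact hS'z p hp
  have hzq' : iteratedDeriv (r - 1) φ q - c * iteratedDeriv (r - 1) x q = 0 := by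
    rw [← hconv q]; exact hS'z q hq
  exact hpq (interval_zeros' hM hc hφlip.continuous hxlip hxbd hε hder1
    (fun z hz => (hder2 z hz).2) ⟨(hK p hp).1, (hK p hp).2⟩ ⟨hq1, hq2⟩ hzp' hzq')
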